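/- Let k₀, j, m ∈ ℕ, let κ ∈ ℤ with κ ≤ k₀ + m − j, and set ℓ₁ = 2m + k₀ − κ. Then for every n ∈ ℕ: if n < ℓ₁, the function x ↦ x^j · (d/dx)^m e^{(k₀)}_n(x) is a linear combination of e^{(κ)}_0, e^{(κ)}_1, …, e^{(κ)}_{n+ℓ₁}; if n ≥ ℓ₁, it is a linear combination of e^{(κ)}_{n'} for n' ∈ { n−ℓ₁, n−ℓ₁+2, n−ℓ₁+4, …, n+ℓ₁ }, and in this combination the coefficient of e^{(κ)}_{n−ℓ₁} equals (i/2)^{k₀−κ−j+m} · (1/2)^j · (−1)^m · Π_{t=1}^{m} (ñ(k₀,n) + k₀ + t) when n + k₀ is even, and equals (−i/2)^{k₀−κ−j+m} · (1/2)^j · Π_{t=1}^{m} (ñ(k₀,n) − t + 1) when n + k₀ is odd. -/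

import Mathlib

/-- The wavepacket basis function `ψ_{k,n}(x) = (x+i)^{-(k+1)} ((x-i)/(x+i))^n`. -/
noncomputable def psi (k n : ℤ) : ℝ → ℂ := fun x =>
  ((x : ℂ) + Complex.I) ^ (-(k + 1)) * (((x : ℂ) - Complex.I) / ((x : ℂ) + Complex.I)) ^ n

/-- The sorting index `ñ(k, n) = ⌊-(k+1)/2⌋ + (-1)^{n+k+1} ⌊(n+1)/2⌋`. -/
noncomputable def ntilde (k : ℤ) (n : ℕ) : ℤ :=
  ⌊(-(k : ℚ) - 1) / 2⌋ + (if Even ((n : ℤ) + k + 1) then 1 else -1) * ⌊((n : ℚ) + 1) / 2⌋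

/-- The sorted basis function `e^{(k)}_n = π^{-1/2} ψ_{k, ñ(k,n)}`. -/
noncomputable def ebasis (k : ℤ) (n : ℕ) : ℝ → ℂ := fun x =>
  (((Real.sqrt Real.pi)⁻¹ : ℝ) : ℂ) * psi k (ntilde k n) x

/-! With `w = (x - i)/(x + i)` one has `ψ_{k,μ} = (x + i)^{-(k+1)} w^μ`, so multiplication by `x`
or by `1 = (x + i)(1 - w)/(2i)` and differentiation act on finite combinations
`∑_{μ=lo}^{hi} a_μ ψ_{k,μ}` by two-term recurrences:
`x ψ_{k,μ} = ½ ψ_{k-1,μ} + ½ ψ_{k-1,μ+1}`, `ψ_{k,μ} = -(i/2) ψ_{k-1,μ} + (i/2) ψ_{k-1,μ+1}` and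
`ψ_{k,μ}' = μ ψ_{k+1,μ-1} - (μ+k+1) ψ_{k+1,μ}`. Each step widens the window `[lo, hi]` by one and
multiplies the two extreme coefficients by explicit factors. Starting from `ψ_{k₀,ν}`, `ν = ñ(k₀,n)`,
and lowering the level to `κ`, `x^j (d/dx)^m e^{(k₀)}_n` is a combination of `ψ_{κ,μ}` for
`ν - m ≤ μ ≤ ν + k₀ + m - κ`. Finally `ñ(κ, ·)` is a bijection `ℕ → ℤ` whose inverse maps this
window into `[0, n + ℓ₁]`, and, when `n ≥ ℓ₁`, onto `{n - ℓ₁, n - ℓ₁ + 2, …, n + ℓ₁}`, with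
`n - ℓ₁` going to the upper end of the window if `n + k₀` is even and to the lower end otherwise. -/

open Complex Finset
open scoped Real

lemma ofReal_add_I_ne_zero (x : ℝ) : (x : ℂ) + I ≠ 0 := by
  intro h
  simpa using congrArg im h

lemma ofReal_sub_I_ne_zero (x : ℝ) : (x : ℂ) - I ≠ 0 := by
  intro h
  simpa using congrArg im h

lemma psi_apply_eq (k ν : ℤ) (x : ℝ) :
    psi k ν x = ((x : ℂ) - I) ^ ν * ((x : ℂ) + I) ^ (-(k + 1 + ν)) := by
  rw [psi, div_zpow, div_eq_mul_inv, ← zpow_neg, show -(k + 1 + ν) = -(k + 1) + -ν by ring,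
    zpow_add₀ (ofReal_add_I_ne_zero x)]
  ring

lemma add_I_mul_psi (k μ : ℤ) (x : ℝ) : ((x : ℂ) + I) * psi k μ x = psi (k - 1) μ x := by
  rw [psi_apply_eq, psi_apply_eq, show -(k - 1 + 1 + μ) = 1 + -(k + 1 + μ) by ring,
    zpow_add₀ (ofReal_add_I_ne_zero x), zpow_one]
  ring

lemma sub_I_mul_psi (k μ : ℤ) (x : ℝ) : ((x : ℂ) - I) * psi k μ x = psi (k - 1) (μ + 1) x := by
  rw [psi_apply_eq, psi_apply_eq, show -(k - 1 + 1 + (μ + 1)) = -(k + 1 + μ) by ring,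
    zpow_add_one₀ (ofReal_sub_I_ne_zero x)]
  ring

lemma ofReal_mul_psi (k μ : ℤ) (x : ℝ) :
    (x : ℂ) * psi k μ x = 1 / 2 * psi (k - 1) μ x + 1 / 2 * psi (k - 1) (μ + 1) x := by
  rw [← add_I_mul_psi, ← sub_I_mul_psi]
  ring

lemma one_mul_psi (k μ : ℤ) (x : ℝ) :
    1 * psi k μ x = -(I / 2) * psi (k - 1) μ x + I / 2 * psi (k - 1) (μ + 1) x := by
  rw [← add_I_mul_psi, ← sub_I_mul_psi]
  linear_combination psi k μ x * I_mul_I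

lemma hasDerivAt_psi (k ν : ℤ) (x : ℝ) :
    HasDerivAt (psi k ν) (ν * psi (k + 1) (ν - 1) x - (ν + k + 1) * psi (k + 1) ν x) x := by
  have hsub := (hasDerivAt_zpow ν _ (.inl (ofReal_sub_I_ne_zero x))).comp (x : ℂ)
    ((hasDerivAt_id _).sub_const I)
  have hadd := (hasDerivAt_zpow (-(k + 1 + ν)) _ (.inl (ofReal_add_I_ne_zero x))).comp (x : ℂ)
    ((hasDerivAt_id _).add_const I)
  rw [show psi k ν = _ from funext (psi_apply_eq k ν)]
  convert (hsub.mul hadd).comp_ofReal using 1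
  · rfl
  rw [psi_apply_eq, psi_apply_eq, show -(k + 1 + 1 + (ν - 1)) = -(k + 1 + ν) by ring,
    show -(k + 1 + 1 + ν) = -(k + 1 + ν) - 1 by ring]
  simp only [Function.comp_apply, id]
  push_cast
  ring

lemma sum_Icc_comp_add_one {M : Type*} [AddCommMonoid M] (g : ℤ → M) (lo hi : ℤ) :
    ∑ μ ∈ Icc lo hi, g (μ + 1) = ∑ μ ∈ Icc (lo + 1) (hi + 1), g μ := by
  rw [← image_add_right_Icc, sum_image (add_left_injective 1).injOn]

lemma sum_Icc_mul_eq_of_subset {R : Type*} [NonUnitalNonAssocSemiring R] {a : ℤ → R}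
    {lo hi : ℤ} (ha : ∀ μ ∉ Icc lo hi, a μ = 0) (G : ℤ → R) {lo' hi' : ℤ} (hlo : lo' ≤ lo)
    (hhi : hi ≤ hi') :
    ∑ μ ∈ Icc lo' hi', a μ * G μ = ∑ μ ∈ Icc lo hi, a μ * G μ :=
  (sum_subset (Icc_subset_Icc hlo hhi) fun μ _ hμ => by rw [ha μ hμ, zero_mul]).symm

structure IsPsiExpansion (k lo hi : ℤ) (a : ℤ → ℂ) (f : ℝ → ℂ) : Prop where
  coeff_eq_zero : ∀ μ ∉ Icc lo hi, a μ = 0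
  apply_eq : ∀ x, f x = ∑ μ ∈ Icc lo hi, a μ * psi k μ x

namespace IsPsiExpansion

variable {k lo hi : ℤ} {a : ℤ → ℂ} {f : ℝ → ℂ}

lemma coeff_lo_sub_one (h : IsPsiExpansion k lo hi a f) : a (lo - 1) = 0 :=
  h.coeff_eq_zero _ (by simp)

lemma coeff_hi_add_one (h : IsPsiExpansion k lo hi a f) : a (hi + 1) = 0 :=
  h.coeff_eq_zero _ (by simp)

lemma mul {w : ℝ → ℂ} {α β : ℂ}
    (hw : ∀ μ x, w x * psi k μ x = α * psi (k - 1) μ x + β * psi (k - 1) (μ + 1) x)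
    (h : IsPsiExpansion k lo hi a f) :
    IsPsiExpansion (k - 1) lo (hi + 1) (fun μ => α * a μ + β * a (μ - 1)) (fun x => w x * f x) where
  coeff_eq_zero μ hμ := by
    rw [mem_Icc] at hμ
    rw [h.coeff_eq_zero μ (by rw [mem_Icc]; omega),
      h.coeff_eq_zero (μ - 1) (by rw [mem_Icc]; omega), mul_zero, mul_zero, add_zero]
  apply_eq x := by
    have hshift := sum_Icc_comp_add_one (fun μ => a (μ - 1) * (β * psi (k - 1) μ x)) (lo - 1) hi
    simp only [add_sub_cancel_right, sub_add_cancel] at hshift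
    calc w x * f x
        = ∑ μ ∈ Icc lo hi, (a μ * (α * psi (k - 1) μ x) + a μ * (β * psi (k - 1) (μ + 1) x)) := by
          rw [h.apply_eq, mul_sum]
          exact sum_congr rfl fun μ _ => by rw [mul_left_comm, hw, mul_add]
      _ = ∑ μ ∈ Icc lo (hi + 1), a μ * (α * psi (k - 1) μ x) +
            ∑ μ ∈ Icc (lo - 1) hi, a μ * (β * psi (k - 1) (μ + 1) x) := by
          rw [sum_add_distrib]
          congr 1 <;> exact (sum_Icc_mul_eq_of_subset h.coeff_eq_zero _ (by omega) (by omega)).symm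
      _ = ∑ μ ∈ Icc lo (hi + 1), (α * a μ + β * a (μ - 1)) * psi (k - 1) μ x := by
          rw [hshift, ← sum_add_distrib]
          exact sum_congr rfl fun μ _ => by ring

lemma pow_mul {w : ℝ → ℂ} {α β : ℂ}
    (hw : ∀ k μ x, w x * psi k μ x = α * psi (k - 1) μ x + β * psi (k - 1) (μ + 1) x)
    (h : IsPsiExpansion k lo hi a f) (r : ℕ) :
    ∃ a', IsPsiExpansion (k - r) lo (hi + r) a' (fun x => w x ^ r * f x) ∧
      a' lo = α ^ r * a lo ∧ a' (hi + r) = β ^ r * a hi := by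
  induction r with
  | zero => exact ⟨a, by simpa using h, by simp, by simp⟩
  | succ r ih =>
    obtain ⟨a', h', hlo, hhi⟩ := ih
    refine ⟨fun μ => α * a' μ + β * a' (μ - 1), ?_, ?_, ?_⟩
    · rw [Nat.cast_succ, ← sub_sub, ← add_assoc]
      convert h'.mul (hw _) using 2 with x
      ring
    · dsimp only
      rw [h'.coeff_lo_sub_one, hlo]
      ring
    · dsimp only
      rw [Nat.cast_succ, ← add_assoc, add_sub_cancel_right, h'.coeff_hi_add_one, hhi]
      ring

lemma deriv (h : IsPsiExpansion k lo hi a f) :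
    IsPsiExpansion (k + 1) (lo - 1) hi (fun μ => (μ + 1) * a (μ + 1) - (μ + k + 1) * a μ)
      (_root_.deriv f) where
  coeff_eq_zero μ hμ := by
    rw [mem_Icc] at hμ
    rw [h.coeff_eq_zero μ (by rw [mem_Icc]; omega),
      h.coeff_eq_zero (μ + 1) (by rw [mem_Icc]; omega), mul_zero, mul_zero, sub_zero]
  apply_eq x := by
    have hshift :=
      sum_Icc_comp_add_one (fun μ => a μ * ((μ : ℂ) * psi (k + 1) (μ - 1) x)) (lo - 1) hi
    simp only [sub_add_cancel, add_sub_cancel_right, Int.cast_add, Int.cast_one] at hshift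
    rw [show f = _ from funext h.apply_eq,
      (HasDerivAt.fun_sum fun μ _ => (hasDerivAt_psi k μ x).const_mul (a μ)).deriv]
    calc ∑ μ ∈ Icc lo hi,
          a μ * (μ * psi (k + 1) (μ - 1) x - (μ + k + 1) * psi (k + 1) μ x)
        = ∑ μ ∈ Icc lo (hi + 1), a μ * (μ * psi (k + 1) (μ - 1) x) -
            ∑ μ ∈ Icc (lo - 1) hi, a μ * ((μ + k + 1) * psi (k + 1) μ x) := by
          rw [sum_Icc_mul_eq_of_subset h.coeff_eq_zero (hi' := hi + 1) _ le_rfl (by omega),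
            sum_Icc_mul_eq_of_subset h.coeff_eq_zero (lo' := lo - 1) _ (by omega) le_rfl,
            ← sum_sub_distrib]
          exact sum_congr rfl fun μ _ => mul_sub _ _ _
      _ = ∑ μ ∈ Icc (lo - 1) hi, ((μ + 1) * a (μ + 1) - (μ + k + 1) * a μ) * psi (k + 1) μ x := by
          rw [← hshift, ← sum_sub_distrib]
          exact sum_congr rfl fun μ _ => by ring

lemma iterate_deriv (h : IsPsiExpansion k lo hi a f) (m : ℕ) :
    ∃ a', IsPsiExpansion (k + m) (lo - m) hi a' (_root_.deriv^[m] f) ∧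
      a' (lo - m) = a lo * ∏ t ∈ Icc 1 m, ((lo : ℂ) - t + 1) ∧
      a' hi = a hi * ((-1) ^ m * ∏ t ∈ Icc 1 m, ((hi : ℂ) + k + t)) := by
  induction m with
  | zero => exact ⟨a, by simpa using h, by simp, by simp⟩
  | succ m ih =>
    obtain ⟨a', h', hlo, hhi⟩ := ih
    refine ⟨fun μ => (μ + 1) * a' (μ + 1) - (μ + ((k + m : ℤ) : ℂ) + 1) * a' μ, ?_, ?_, ?_⟩
    · rw [Function.iterate_succ_apply', Nat.cast_succ, ← add_assoc, ← sub_sub]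
      exact h'.deriv
    · dsimp only
      rw [Nat.cast_succ, ← sub_sub, sub_add_cancel, h'.coeff_lo_sub_one, hlo,
        prod_Icc_succ_top (Nat.le_add_left 1 m)]
      push_cast
      ring
    · dsimp only
      rw [h'.coeff_hi_add_one, hhi, prod_Icc_succ_top (Nat.le_add_left 1 m)]
      push_cast
      ring

lemma pow_mul_iterate_deriv (h : IsPsiExpansion k lo hi a f) (j m : ℕ) {κ : ℤ}
    (hκ : κ ≤ k + m - j) :
    ∃ a', IsPsiExpansion κ (lo - m) (hi + (k + m - κ)) a'
        (fun x => (x : ℂ) ^ j * _root_.deriv^[m] f x) ∧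
      a' (lo - m) = a lo * ((-(I / 2)) ^ (k - κ - j + m) * (1 / 2) ^ j *
        ∏ t ∈ Icc 1 m, ((lo : ℂ) - t + 1)) ∧
      a' (hi + (k + m - κ)) = a hi * ((I / 2) ^ (k - κ - j + m) * (1 / 2) ^ j * (-1) ^ m *
        ∏ t ∈ Icc 1 m, ((hi : ℂ) + k + t)) := by
  obtain ⟨p, hp⟩ : ∃ p : ℕ, (p : ℤ) = k - κ - j + m := ⟨_, Int.toNat_of_nonneg (by omega)⟩
  obtain ⟨a₁, h₁, hlo₁, hhi₁⟩ := h.iterate_deriv m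
  obtain ⟨a₂, h₂, hlo₂, hhi₂⟩ := h₁.pow_mul (w := fun x => (x : ℂ)) ofReal_mul_psi j
  obtain ⟨a₃, h₃, hlo₃, hhi₃⟩ := h₂.pow_mul (w := fun _ => 1) one_mul_psi p
  have hhi : hi + (k + m - κ) = hi + j + p := by omega
  refine ⟨a₃, ?_, ?_, ?_⟩
  · rw [hhi, show κ = k + m - j - p by omega]
    simpa only [one_pow, one_mul] using h₃
  · rw [hlo₃, hlo₂, hlo₁, ← hp, zpow_natCast]
    ring
  · rw [hhi, hhi₃, hhi₂, hhi₁, ← hp, zpow_natCast]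
    ring

end IsPsiExpansion

lemma two_mul_ntilde (k : ℤ) (n : ℕ) :
    ((n : ℤ) + k) % 2 = 0 ∧ 2 * ntilde k n = -k - 2 - n ∨
      ((n : ℤ) + k) % 2 = 1 ∧ 2 * ntilde k n = n - k - 1 := by
  have hk : ⌊(-(k : ℚ) - 1) / 2⌋ = (-k - 1) / 2 := by
    simpa using Rat.floor_intCast_div_natCast (-k - 1) 2
  have hn : ⌊((n : ℚ) + 1) / 2⌋ = ((n : ℤ) + 1) / 2 := by
    simpa using Rat.floor_intCast_div_natCast ((n : ℤ) + 1) 2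
  rw [ntilde, hk, hn]
  split_ifs with h <;> rw [Int.even_iff] at h <;> omega

lemma ntilde_injective (k : ℤ) : Function.Injective (ntilde k) := by
  intro n₁ n₂ h
  have := two_mul_ntilde k n₁
  have := two_mul_ntilde k n₂
  omega

lemma ntilde_surjective (k : ℤ) : Function.Surjective (ntilde k) := by
  intro μ
  rcases le_or_gt 0 (2 * μ + k + 1) with h | h
  · refine ⟨(2 * μ + k + 1).toNat, ?_⟩
    have := two_mul_ntilde k (2 * μ + k + 1).toNat
    omega
  · refine ⟨(-k - 2 - 2 * μ).toNat, ?_⟩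
    have := two_mul_ntilde k (-k - 2 - 2 * μ).toNat
    omega

section IndexWindow

variable {k κ m : ℤ} {n n' : ℕ}

lemma le_add_of_ntilde_mem_Icc
    (h : ntilde κ n' ∈ Icc (ntilde k n - m) (ntilde k n + (k + m - κ))) :
    (n' : ℤ) ≤ n + (2 * m + k - κ) := by
  rw [mem_Icc] at h
  have := two_mul_ntilde k n
  have := two_mul_ntilde κ n'
  omega

lemma exists_eq_sub_add_two_mul_of_ntilde_mem_Icc
    (h : ntilde κ n' ∈ Icc (ntilde k n - m) (ntilde k n + (k + m - κ)))
    (hn : 2 * m + k - κ ≤ n) :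
    ∃ s : ℕ, s ≤ 2 * m + k - κ ∧ (n' : ℤ) = n - (2 * m + k - κ) + 2 * s := by
  rw [mem_Icc] at h
  have := two_mul_ntilde k n
  have := two_mul_ntilde κ n'
  exact ⟨((n' - n + (2 * m + k - κ)) / 2).toNat, by omega, by omega⟩

lemma ntilde_toNat_sub_of_even (h : Even ((n : ℤ) + k)) (hn : 2 * m + k - κ ≤ n) :
    ntilde κ ((n : ℤ) - (2 * m + k - κ)).toNat = ntilde k n + (k + m - κ) := by
  rw [Int.even_iff] at h
  have := two_mul_ntilde k n
  have := two_mul_ntilde κ ((n : ℤ) - (2 * m + k - κ)).toNat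
  omega

lemma ntilde_toNat_sub_of_not_even (h : ¬Even ((n : ℤ) + k)) (hn : 2 * m + k - κ ≤ n) :
    ntilde κ ((n : ℤ) - (2 * m + k - κ)).toNat = ntilde k n - m := by
  rw [Int.not_even_iff] at h
  have := two_mul_ntilde k n
  have := two_mul_ntilde κ ((n : ℤ) - (2 * m + k - κ)).toNat
  omega

end IndexWindow

lemma isPsiExpansion_ebasis (k : ℤ) (n : ℕ) :
    IsPsiExpansion k (ntilde k n) (ntilde k n)
      (Pi.single (ntilde k n) (((√π)⁻¹ : ℝ) : ℂ)) (ebasis k n) where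
  coeff_eq_zero μ hμ := Pi.single_eq_of_ne (by simpa using hμ) _
  apply_eq x := by simp [ebasis]

lemma psi_ntilde_eq_sqrt_pi_mul_ebasis (k : ℤ) (n : ℕ) (x : ℝ) :
    psi k (ntilde k n) x = √π * ebasis k n x := by
  have : (√π : ℂ) ≠ 0 := ofReal_ne_zero.2 (Real.sqrt_ne_zero'.2 Real.pi_pos)
  rw [ebasis, ofReal_inv, mul_inv_cancel_left₀ this]

lemma IsPsiExpansion.eq_sum_ebasis {κ lo hi : ℤ} {a : ℤ → ℂ} {f : ℝ → ℂ} {ι : Type*}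
    (h : IsPsiExpansion κ lo hi a f) (S : Finset ι) (g : ι → ℕ) (hg : Set.InjOn g S)
    (hS : ∀ n', ntilde κ n' ∈ Icc lo hi → ∃ i ∈ S, g i = n') (x : ℝ) :
    f x = ∑ i ∈ S, √π * a (ntilde κ (g i)) * ebasis κ (g i) x := by
  have hsub : Icc lo hi ⊆ S.image (ntilde κ ∘ g) := by
    intro μ hμ
    obtain ⟨n', rfl⟩ := ntilde_surjective κ μ
    obtain ⟨i, hi, rfl⟩ := hS n' hμ
    exact mem_image_of_mem _ hi
  calc f x = ∑ μ ∈ Icc lo hi, a μ * psi κ μ x := h.apply_eq x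
    _ = ∑ μ ∈ S.image (ntilde κ ∘ g), a μ * psi κ μ x :=
        sum_subset hsub fun μ _ hμ => by rw [h.coeff_eq_zero μ hμ, zero_mul]
    _ = ∑ i ∈ S, √π * a (ntilde κ (g i)) * ebasis κ (g i) x := by
        rw [sum_image ((ntilde_injective κ).comp_injOn hg)]
        refine sum_congr rfl fun i _ => ?_
        rw [Function.comp_apply, psi_ntilde_eq_sqrt_pi_mul_ebasis]
        ring

/-- Let `k₀, j, m ∈ ℕ`, `κ ∈ ℤ` with `κ ≤ k₀ + m - j`, and set
`ℓ₁ = 2m + k₀ - κ` (a nonnegative integer).  For every `n ∈ ℕ`: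
if `n < ℓ₁` then `x^j (d/dx)^m e^{(k₀)}_n` is a linear combination of
`e^{(κ)}_0, …, e^{(κ)}_{n+ℓ₁}`; if `n ≥ ℓ₁` it is a linear combination of
`e^{(κ)}_{n-ℓ₁+2s}` for `s = 0, …, ℓ₁`, whose coefficient of `e^{(κ)}_{n-ℓ₁}` is
`(i/2)^{k₀-κ-j+m} (1/2)^j (-1)^m Π_{t=1}^m (ñ(k₀,n) + k₀ + t)` when `n + k₀` is even,
and `(-i/2)^{k₀-κ-j+m} (1/2)^j Π_{t=1}^m (ñ(k₀,n) - t + 1)` when `n + k₀` is odd. -/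
theorem stmt9 (k₀ j m : ℕ) (κ : ℤ) (hκ : κ ≤ (k₀ : ℤ) + (m : ℤ) - (j : ℤ)) (n : ℕ) :
    ((n : ℤ) < 2 * (m : ℤ) + (k₀ : ℤ) - κ →
      ∃ c : ℕ → ℂ, ∀ x : ℝ, ((x : ℂ)) ^ j * deriv^[m] (ebasis (k₀ : ℤ) n) x =
        ∑ n' ∈ Finset.range (((n : ℤ) + (2 * (m : ℤ) + (k₀ : ℤ) - κ)).toNat + 1),
          c n' * ebasis κ n' x) ∧
    (2 * (m : ℤ) + (k₀ : ℤ) - κ ≤ (n : ℤ) →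
      ∃ c : ℕ → ℂ,
        (∀ x : ℝ, ((x : ℂ)) ^ j * deriv^[m] (ebasis (k₀ : ℤ) n) x =
          ∑ s ∈ Finset.range ((2 * (m : ℤ) + (k₀ : ℤ) - κ).toNat + 1),
            c s * ebasis κ (((n : ℤ) - (2 * (m : ℤ) + (k₀ : ℤ) - κ)).toNat + 2 * s) x) ∧
        (Even ((n : ℤ) + (k₀ : ℤ)) →
          c 0 = (Complex.I / 2) ^ ((k₀ : ℤ) - κ - (j : ℤ) + (m : ℤ)) * ((1 : ℂ) / 2) ^ j *
            (-1 : ℂ) ^ m *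
            ∏ t ∈ Finset.Icc 1 m, ((ntilde (k₀ : ℤ) n : ℂ) + (k₀ : ℂ) + (t : ℂ))) ∧
        (¬ Even ((n : ℤ) + (k₀ : ℤ)) →
          c 0 = (-(Complex.I / 2)) ^ ((k₀ : ℤ) - κ - (j : ℤ) + (m : ℤ)) * ((1 : ℂ) / 2) ^ j *
            ∏ t ∈ Finset.Icc 1 m, ((ntilde (k₀ : ℤ) n : ℂ) - (t : ℂ) + 1))) := by
  obtain ⟨a, ha, hlo, hhi⟩ := (isPsiExpansion_ebasis k₀ n).pow_mul_iterate_deriv j m hκ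
  rw [Pi.single_eq_same] at hlo hhi
  have hC : (√π : ℂ) * (((√π)⁻¹ : ℝ) : ℂ) = 1 := by
    rw [ofReal_inv, mul_inv_cancel₀ (ofReal_ne_zero.2 (Real.sqrt_ne_zero'.2 Real.pi_pos))]
  refine ⟨fun _ => ⟨_, ha.eq_sum_ebasis _ id (Set.injOn_id _) fun n' hn' =>
    ⟨n', mem_range.2 (by have := le_add_of_ntilde_mem_Icc hn'; omega), rfl⟩⟩, fun hn => ?_⟩
  refine ⟨fun s => √π * a (ntilde κ (((n : ℤ) - (2 * m + k₀ - κ)).toNat + 2 * s)),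
    ha.eq_sum_ebasis _ _ (fun s _ s' _ hs => by omega) fun n' hn' => ?_, fun heven => ?_,
    fun hodd => ?_⟩
  · obtain ⟨s, hs, hn'⟩ := exists_eq_sub_add_two_mul_of_ntilde_mem_Icc hn' hn
    exact ⟨s, mem_range.2 (by omega), by omega⟩
  · dsimp only
    rw [mul_zero, add_zero, ntilde_toNat_sub_of_even heven hn, hhi, ← mul_assoc, hC, one_mul]
    push_cast
    ring
  · dsimp only
    rw [mul_zero, add_zero, ntilde_toNat_sub_of_not_even hodd hn, hlo, ← mul_assoc, hC, one_mul]
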